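/- arXiv:0910.4115 — 2 statements merged into one kernel-verified Lean document; each statement's English description precedes it below -/
import Mathlib

section
/- Let a < b be real numbers and let p > 1, q with 1/p + 1/q = 1. Let K : ℝ × ℝ → ℝ be continuous and nonnegative on [a,b] × [a,b], let f, g : ℝ → ℝ be continuous and nonnegative on [a,b], and let φ, ψ : ℝ → ℝ be continuous and positive on [a,b]. Let F₁, G₁ : ℝ → ℝ be functions such that ∫_a^b K(x,y)·ψ(y)^(−p) dy ≤ F₁(x) for all x ∈ [a,b] and ∫_a^b K(x,y)·φ(x)^(−q) dx ≤ G₁(y) for all y ∈ [a,b]. Then ∫_a^b ∫_a^b K(x,y)·f(x)·g(y) dx dy ≤ (∫_a^b φ(x)^p·F₁(x)·f(x)^p dx)^(1/p) · (∫_a^b ψ(y)^q·G₁(y)·g(y)^q dy)^(1/q). (Inequality (7) of Theorem 3.8, continuous case 𝕋 = ℝ.) -/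
/-!
On the square write `K f g = (K^(1/p) f φ / ψ) · (K^(1/q) g ψ / φ)` and apply Hölder's inequality
for the product measure. The `p`-th power of the first factor is `φ(x)^p f(x)^p · K(x,y) ψ(y)^(-p)`;
integrating it first in `y` and using `∫ K(x,·) ψ^(-p) ≤ F₁ x` bounds its integral by
`∫ φ^p F₁ f^p`. The second factor is handled symmetrically, integrating first in `x`.
-/

open MeasureTheory Set

theorem ContinuousOn.comp_fst_prod {X Y Z : Type*} [TopologicalSpace X] [TopologicalSpace Y]
    [TopologicalSpace Z] {f : X → Z} {s : Set X} (hf : ContinuousOn f s) (t : Set Y) :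
    ContinuousOn (fun z : X × Y => f z.1) (s ×ˢ t) :=
  hf.comp continuousOn_fst fun _ hz => hz.1

theorem ContinuousOn.comp_snd_prod {X Y Z : Type*} [TopologicalSpace X] [TopologicalSpace Y]
    [TopologicalSpace Z] {g : Y → Z} {t : Set Y} (hg : ContinuousOn g t) (s : Set X) :
    ContinuousOn (fun z : X × Y => g z.2) (s ×ˢ t) :=
  hg.comp continuousOn_snd fun _ hz => hz.2

section Pointwise

variable {p q r k s t φ ψ : ℝ}

theorem holder_factors_mul (hpq : p.HolderConjugate q) (hk : 0 ≤ k) (hφ : 0 < φ)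
    (hψ : 0 < ψ) :
    k ^ (1 / p) * (s * φ / ψ) * (k ^ (1 / q) * (t * ψ / φ)) = k * s * t := by
  have hk_split : k ^ (1 / p) * k ^ (1 / q) = k := by
    rw [← Real.rpow_add_of_nonneg hk (by simp [hpq.nonneg]) (by simp [hpq.symm.nonneg]),
      one_div, one_div, hpq.inv_add_inv_eq_one, Real.rpow_one]
  calc k ^ (1 / p) * (s * φ / ψ) * (k ^ (1 / q) * (t * ψ / φ))
      = k ^ (1 / p) * k ^ (1 / q) * s * t := by field_simp
    _ = k * s * t := by rw [hk_split]

theorem holder_factor_rpow (hr : 0 < r) (hk : 0 ≤ k) (hs : 0 ≤ s) (hφ : 0 < φ)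
    (hψ : 0 < ψ) :
    (k ^ (1 / r) * (s * φ / ψ)) ^ r = φ ^ r * s ^ r * (k * ψ ^ (-r)) := by
  rw [Real.mul_rpow (by positivity) (by positivity), ← Real.rpow_mul hk,
    one_div_mul_cancel hr.ne', Real.rpow_one, Real.div_rpow (by positivity) hψ.le,
    Real.mul_rpow hs hφ.le, Real.rpow_neg hψ.le]
  ring

end Pointwise

theorem ContinuousOn.memLp_restrict_of_isCompact {Z E : Type*} [TopologicalSpace Z]
    [MeasurableSpace Z] [OpensMeasurableSpace Z] [NormedAddCommGroup E] {μ : Measure Z}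
    [IsFiniteMeasureOnCompacts μ]
    {S : Set Z} {f : Z → E} (hf : ContinuousOn f S) (hS : IsCompact S) (hSm : MeasurableSet S)
    (r : ENNReal) : MemLp f r (μ.restrict S) := by
  have : IsFiniteMeasure (μ.restrict S) := isFiniteMeasure_restrict.2 hS.measure_lt_top.ne
  obtain ⟨C, hC⟩ := hS.exists_bound_of_continuousOn hf
  exact (memLp_top_of_bound (hf.aestronglyMeasurable_of_isCompact hS hSm) C
    (ae_restrict_of_forall_mem hSm hC)).mono_exponent le_top

theorem setIntegral_mul_le_Lp_mul_Lq_of_continuousOn {Z : Type*} [TopologicalSpace Z]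
    [MeasurableSpace Z] [OpensMeasurableSpace Z] {μ : Measure Z} [IsFiniteMeasureOnCompacts μ]
    {S : Set Z} (hS : IsCompact S) (hSm : MeasurableSet S) {p q : ℝ} (hpq : p.HolderConjugate q)
    {u v : Z → ℝ} (hu : ContinuousOn u S) (hv : ContinuousOn v S)
    (hu0 : ∀ z ∈ S, 0 ≤ u z) (hv0 : ∀ z ∈ S, 0 ≤ v z) :
    ∫ z in S, u z * v z ∂μ ≤
      (∫ z in S, u z ^ p ∂μ) ^ (1 / p) * (∫ z in S, v z ^ q ∂μ) ^ (1 / q) :=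
  integral_mul_le_Lp_mul_Lq_of_nonneg hpq (ae_restrict_of_forall_mem hSm hu0)
    (ae_restrict_of_forall_mem hSm hv0) (hu.memLp_restrict_of_isCompact hS hSm _)
    (hv.memLp_restrict_of_isCompact hS hSm _)

section Fubini

variable {X Y : Type*} [MeasurableSpace X] [MeasurableSpace Y] {μ : Measure X} {ν : Measure Y}
  [SFinite μ] [SFinite ν] {s : Set X} {t : Set Y} {k : X × Y → ℝ}

theorem setIntegral_prod_fst_mul_le_of_row_bound {u F : X → ℝ} (hs : MeasurableSet s)
    (hk : IntegrableOn (fun z => u z.1 * k z) (s ×ˢ t) (μ.prod ν))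
    (hF : IntegrableOn (fun x => u x * F x) s μ) (hu : ∀ x ∈ s, 0 ≤ u x)
    (hrow : ∀ x ∈ s, ∫ y in t, k (x, y) ∂ν ≤ F x) :
    ∫ z in s ×ˢ t, u z.1 * k z ∂μ.prod ν ≤ ∫ x in s, u x * F x ∂μ := by
  rw [IntegrableOn, ← Measure.prod_restrict] at hk
  rw [← Measure.prod_restrict, integral_prod _ hk]
  refine setIntegral_mono_on hk.integral_prod_left hF hs fun x hx => ?_
  simp only [integral_const_mul]
  exact mul_le_mul_of_nonneg_left (hrow x hx) (hu x hx)

theorem setIntegral_prod_snd_mul_le_of_column_bound {v G : Y → ℝ} (ht : MeasurableSet t)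
    (hk : IntegrableOn (fun z => v z.2 * k z) (s ×ˢ t) (μ.prod ν))
    (hG : IntegrableOn (fun y => v y * G y) t ν) (hv : ∀ y ∈ t, 0 ≤ v y)
    (hcol : ∀ y ∈ t, ∫ x in s, k (x, y) ∂μ ≤ G y) :
    ∫ z in s ×ˢ t, v z.2 * k z ∂μ.prod ν ≤ ∫ y in t, v y * G y ∂ν := by
  rw [IntegrableOn, ← Measure.prod_restrict] at hk
  rw [← Measure.prod_restrict, integral_prod_symm _ hk]
  refine setIntegral_mono_on hk.integral_prod_right hG ht fun y hy => ?_
  simp only [integral_const_mul]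
  exact mul_le_mul_of_nonneg_left (hcol y hy) (hv y hy)

end Fubini

section KernelHolder

variable {X Y : Type*} [TopologicalSpace X] [MeasurableSpace X] [TopologicalSpace Y]
  [MeasurableSpace Y] [OpensMeasurableSpace (X × Y)] {μ : Measure X} {ν : Measure Y}
  [IsFiniteMeasureOnCompacts μ] [IsFiniteMeasureOnCompacts ν] {s : Set X} {t : Set Y}
  {p q : ℝ} {K : X × Y → ℝ} {f φ : X → ℝ} {g ψ : Y → ℝ}

theorem setIntegral_kernel_mul_le_weighted_holder (hs : IsCompact s) (ht : IsCompact t)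
    (hsm : MeasurableSet s) (htm : MeasurableSet t) (hpq : p.HolderConjugate q)
    (hK : ContinuousOn K (s ×ˢ t)) (hK0 : ∀ z ∈ s ×ˢ t, 0 ≤ K z)
    (hf : ContinuousOn f s) (hf0 : ∀ x ∈ s, 0 ≤ f x)
    (hg : ContinuousOn g t) (hg0 : ∀ y ∈ t, 0 ≤ g y)
    (hφ : ContinuousOn φ s) (hφ0 : ∀ x ∈ s, 0 < φ x)
    (hψ : ContinuousOn ψ t) (hψ0 : ∀ y ∈ t, 0 < ψ y) :
    ∫ z in s ×ˢ t, K z * f z.1 * g z.2 ∂μ.prod ν ≤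
      (∫ z in s ×ˢ t, φ z.1 ^ p * f z.1 ^ p * (K z * ψ z.2 ^ (-p)) ∂μ.prod ν) ^ (1 / p) *
      (∫ z in s ×ˢ t, ψ z.2 ^ q * g z.2 ^ q * (K z * φ z.1 ^ (-q)) ∂μ.prod ν) ^ (1 / q) := by
  have hSm := hsm.prod htm
  have hu : ContinuousOn (fun z => K z ^ (1 / p) * (f z.1 * φ z.1 / ψ z.2)) (s ×ˢ t) :=
    (hK.rpow_const fun _ _ => Or.inr (by simp [hpq.nonneg])).mul
      (((hf.comp_fst_prod t).mul (hφ.comp_fst_prod t)).div (hψ.comp_snd_prod s)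
        fun z hz => (hψ0 _ hz.2).ne')
  have hv : ContinuousOn (fun z => K z ^ (1 / q) * (g z.2 * ψ z.2 / φ z.1)) (s ×ˢ t) :=
    (hK.rpow_const fun _ _ => Or.inr (by simp [hpq.symm.nonneg])).mul
      (((hg.comp_snd_prod s).mul (hψ.comp_snd_prod s)).div (hφ.comp_fst_prod t)
        fun z hz => (hφ0 _ hz.1).ne')
  calc ∫ z in s ×ˢ t, K z * f z.1 * g z.2 ∂μ.prod ν
      = ∫ z in s ×ˢ t, K z ^ (1 / p) * (f z.1 * φ z.1 / ψ z.2) *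
          (K z ^ (1 / q) * (g z.2 * ψ z.2 / φ z.1)) ∂μ.prod ν :=
        setIntegral_congr_fun hSm fun z hz =>
          (holder_factors_mul hpq (hK0 z hz) (hφ0 _ hz.1) (hψ0 _ hz.2)).symm
    _ ≤ _ := setIntegral_mul_le_Lp_mul_Lq_of_continuousOn (hs.prod ht) hSm hpq hu hv
        (fun z hz => mul_nonneg (Real.rpow_nonneg (hK0 z hz) _)
          (div_nonneg (mul_nonneg (hf0 _ hz.1) (hφ0 _ hz.1).le) (hψ0 _ hz.2).le))
        (fun z hz => mul_nonneg (Real.rpow_nonneg (hK0 z hz) _)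
          (div_nonneg (mul_nonneg (hg0 _ hz.2) (hψ0 _ hz.2).le) (hφ0 _ hz.1).le))
    _ = _ := by
      rw [setIntegral_congr_fun hSm fun z hz =>
          holder_factor_rpow hpq.pos (hK0 z hz) (hf0 _ hz.1) (hφ0 _ hz.1) (hψ0 _ hz.2),
        setIntegral_congr_fun hSm fun z hz =>
          holder_factor_rpow hpq.symm.pos (hK0 z hz) (hg0 _ hz.2) (hψ0 _ hz.2) (hφ0 _ hz.1)]

end KernelHolder

section KernelInequality

variable {X Y : Type*} [TopologicalSpace X] [MeasurableSpace X] [OpensMeasurableSpace X]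
  [TopologicalSpace Y] [MeasurableSpace Y] [OpensMeasurableSpace Y]
  [OpensMeasurableSpace (X × Y)] {μ : Measure X} {ν : Measure Y}
  [IsFiniteMeasureOnCompacts μ] [IsFiniteMeasureOnCompacts ν]
  [SFinite μ] [SFinite ν] {s : Set X} {t : Set Y}
  {p q : ℝ} {K : X × Y → ℝ} {f φ F₁ : X → ℝ} {g ψ G₁ : Y → ℝ}

theorem setIntegral_kernel_mul_le_of_row_column_bounds (hs : IsCompact s) (ht : IsCompact t)
    (hsm : MeasurableSet s) (htm : MeasurableSet t) (hpq : p.HolderConjugate q)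
    (hK : ContinuousOn K (s ×ˢ t)) (hK0 : ∀ z ∈ s ×ˢ t, 0 ≤ K z)
    (hf : ContinuousOn f s) (hf0 : ∀ x ∈ s, 0 ≤ f x)
    (hg : ContinuousOn g t) (hg0 : ∀ y ∈ t, 0 ≤ g y)
    (hφ : ContinuousOn φ s) (hφ0 : ∀ x ∈ s, 0 < φ x)
    (hψ : ContinuousOn ψ t) (hψ0 : ∀ y ∈ t, 0 < ψ y)
    (hF₁ : ContinuousOn F₁ s) (hG₁ : ContinuousOn G₁ t)
    (hrow : ∀ x ∈ s, ∫ y in t, K (x, y) * ψ y ^ (-p) ∂ν ≤ F₁ x)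
    (hcol : ∀ y ∈ t, ∫ x in s, K (x, y) * φ x ^ (-q) ∂μ ≤ G₁ y) :
    ∫ z in s ×ˢ t, K z * f z.1 * g z.2 ∂μ.prod ν ≤
      (∫ x in s, φ x ^ p * F₁ x * f x ^ p ∂μ) ^ (1 / p) *
      (∫ y in t, ψ y ^ q * G₁ y * g y ^ q ∂ν) ^ (1 / q) := by
  have hS := hs.prod ht
  have hSm := hsm.prod htm
  have hp0 := hpq.nonneg
  have hq0 := hpq.symm.nonneg
  have hfφ : ContinuousOn (fun x => φ x ^ p * f x ^ p) s :=
    (hφ.rpow_const fun _ _ => Or.inr hp0).mul (hf.rpow_const fun _ _ => Or.inr hp0)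
  have hgψ : ContinuousOn (fun y => ψ y ^ q * g y ^ q) t :=
    (hψ.rpow_const fun _ _ => Or.inr hq0).mul (hg.rpow_const fun _ _ => Or.inr hq0)
  have hKψ : ContinuousOn (fun z => K z * ψ z.2 ^ (-p)) (s ×ˢ t) :=
    hK.mul ((hψ.rpow_const fun y hy => Or.inl (hψ0 y hy).ne').comp_snd_prod s)
  have hKφ : ContinuousOn (fun z => K z * φ z.1 ^ (-q)) (s ×ˢ t) :=
    hK.mul ((hφ.rpow_const fun x hx => Or.inl (hφ0 x hx).ne').comp_fst_prod t)
  have hA : ∫ z in s ×ˢ t, φ z.1 ^ p * f z.1 ^ p * (K z * ψ z.2 ^ (-p)) ∂μ.prod ν ≤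
      ∫ x in s, φ x ^ p * f x ^ p * F₁ x ∂μ :=
    setIntegral_prod_fst_mul_le_of_row_bound hsm
      (((hfφ.comp_fst_prod t).mul hKψ).integrableOn_compact' hS hSm)
      ((hfφ.mul hF₁).integrableOn_compact' hs hsm)
      (fun x hx => mul_nonneg (Real.rpow_nonneg (hφ0 x hx).le _) (Real.rpow_nonneg (hf0 x hx) _))
      hrow
  have hB : ∫ z in s ×ˢ t, ψ z.2 ^ q * g z.2 ^ q * (K z * φ z.1 ^ (-q)) ∂μ.prod ν ≤
      ∫ y in t, ψ y ^ q * g y ^ q * G₁ y ∂ν :=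
    setIntegral_prod_snd_mul_le_of_column_bound htm
      (((hgψ.comp_snd_prod s).mul hKφ).integrableOn_compact' hS hSm)
      ((hgψ.mul hG₁).integrableOn_compact' ht htm)
      (fun y hy => mul_nonneg (Real.rpow_nonneg (hψ0 y hy).le _) (Real.rpow_nonneg (hg0 y hy) _))
      hcol
  have hA0 : 0 ≤ ∫ z in s ×ˢ t, φ z.1 ^ p * f z.1 ^ p * (K z * ψ z.2 ^ (-p)) ∂μ.prod ν :=
    setIntegral_nonneg hSm fun z hz => by
      have := hK0 z hz; have := hφ0 _ hz.1; have := hf0 _ hz.1; have := hψ0 _ hz.2; positivity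
  have hB0 : 0 ≤ ∫ z in s ×ˢ t, ψ z.2 ^ q * g z.2 ^ q * (K z * φ z.1 ^ (-q)) ∂μ.prod ν :=
    setIntegral_nonneg hSm fun z hz => by
      have := hK0 z hz; have := hψ0 _ hz.2; have := hg0 _ hz.2; have := hφ0 _ hz.1; positivity
  calc ∫ z in s ×ˢ t, K z * f z.1 * g z.2 ∂μ.prod ν
      ≤ _ := setIntegral_kernel_mul_le_weighted_holder hs ht hsm htm hpq hK hK0 hf hf0 hg hg0
          hφ hφ0 hψ hψ0
    _ ≤ (∫ x in s, φ x ^ p * f x ^ p * F₁ x ∂μ) ^ (1 / p) *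
        (∫ y in t, ψ y ^ q * g y ^ q * G₁ y ∂ν) ^ (1 / q) := by
      gcongr
      exact Real.rpow_nonneg (hA0.trans hA) _
    _ = _ := by simp only [mul_right_comm _ _ (F₁ _), mul_right_comm _ _ (G₁ _)]

end KernelInequality

theorem intervalIntegral_eq_setIntegral_Icc {a b : ℝ} (hab : a ≤ b) (f : ℝ → ℝ) :
    ∫ x in a..b, f x = ∫ x in Icc a b, f x := by
  rw [intervalIntegral.integral_of_le hab, integral_Icc_eq_integral_Ioc]

theorem intervalIntegral_intervalIntegral_eq_setIntegral_Icc_prod {a b c d : ℝ} (hab : a ≤ b)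
    (hcd : c ≤ d) {F : ℝ × ℝ → ℝ}
    (hF : IntegrableOn F (Icc a b ×ˢ Icc c d) (volume.prod volume)) :
    ∫ y in c..d, ∫ x in a..b, F (x, y) = ∫ z in Icc a b ×ˢ Icc c d, F z ∂volume.prod volume := by
  simp only [intervalIntegral_eq_setIntegral_Icc hab, intervalIntegral_eq_setIntegral_Icc hcd]
  rw [IntegrableOn, ← Measure.prod_restrict] at hF
  rw [← Measure.prod_restrict, integral_prod_symm _ hF]

/-- Inequality (7) of Theorem 3.8, continuous case 𝕋 = ℝ. -/
theorem bounded_kernel_first_inequality_continuous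
    (a b p q : ℝ) (K : ℝ × ℝ → ℝ) (f g φ ψ F₁ G₁ : ℝ → ℝ)
    (hab : a < b) (hp : 1 < p) (hpq : 1 / p + 1 / q = 1)
    (hK : ContinuousOn K (Set.Icc a b ×ˢ Set.Icc a b))
    (hKnn : ∀ z ∈ Set.Icc a b ×ˢ Set.Icc a b, 0 ≤ K z)
    (hf : ContinuousOn f (Set.Icc a b)) (hfnn : ∀ t ∈ Set.Icc a b, 0 ≤ f t)
    (hg : ContinuousOn g (Set.Icc a b)) (hgnn : ∀ t ∈ Set.Icc a b, 0 ≤ g t)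
    (hφ : ContinuousOn φ (Set.Icc a b)) (hφpos : ∀ t ∈ Set.Icc a b, 0 < φ t)
    (hψ : ContinuousOn ψ (Set.Icc a b)) (hψpos : ∀ t ∈ Set.Icc a b, 0 < ψ t)
    (hF₁ : ContinuousOn F₁ (Set.Icc a b)) (hG₁ : ContinuousOn G₁ (Set.Icc a b))
    (hFbound : ∀ x ∈ Set.Icc a b, (∫ y in a..b, K (x, y) * ψ y ^ (-p)) ≤ F₁ x)
    (hGbound : ∀ y ∈ Set.Icc a b, (∫ x in a..b, K (x, y) * φ x ^ (-q)) ≤ G₁ y) :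
    (∫ y in a..b, ∫ x in a..b, K (x, y) * f x * g y)
      ≤ (∫ x in a..b, φ x ^ p * F₁ x * f x ^ p) ^ (1 / p) *
        (∫ y in a..b, ψ y ^ q * G₁ y * g y ^ q) ^ (1 / q) := by
  have hpq' : p.HolderConjugate q :=
    Real.holderConjugate_iff.mpr ⟨hp, by simpa only [one_div] using hpq⟩
  have hKfg : ContinuousOn (fun z => K z * f z.1 * g z.2) (Icc a b ×ˢ Icc a b) :=
    (hK.mul (hf.comp_fst_prod _)).mul (hg.comp_snd_prod _)
  calc (∫ y in a..b, ∫ x in a..b, K (x, y) * f x * g y)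
      = ∫ z in Icc a b ×ˢ Icc a b, K z * f z.1 * g z.2 ∂volume.prod volume :=
        intervalIntegral_intervalIntegral_eq_setIntegral_Icc_prod
          (F := fun z => K z * f z.1 * g z.2) hab.le hab.le
          (hKfg.integrableOn_compact (isCompact_Icc.prod isCompact_Icc))
    _ ≤ _ := by
      simp only [intervalIntegral_eq_setIntegral_Icc hab.le] at hFbound hGbound ⊢
      exact setIntegral_kernel_mul_le_of_row_column_bounds isCompact_Icc isCompact_Icc
        measurableSet_Icc measurableSet_Icc hpq' hK hKnn hf hfnn hg hgnn hφ hφpos hψ hψpos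
        hF₁ hG₁ hFbound hGbound
end

section
/- Let a < b and c < d be real numbers, p > 1, q with 1/p + 1/q = 1, and C > 0. Let F : ℝ → ℝ be continuous and positive on [a,b], G : ℝ → ℝ continuous and positive on [c,d], f : ℝ → ℝ continuous on [a,b], g : ℝ → ℝ continuous on [c,d], M, N : ℝ → ℝ continuous and positive, and L : ℝ × ℝ → ℝ continuous and positive. Assume 0 < ∫_a^b M(f(t))^p·F(t)^p dt < ∞ and 0 < ∫_c^d N(g(t))^q·G(t)^q dt < ∞. If ∫_c^d N(g(y))^(−p)·(∫_a^b F(x)/L(f(x),g(y)) dx)^p dy ≤ C^p·∫_a^b M(f(t))^p·F(t)^p dt, then ∫_a^b ∫_c^d F(x)·G(y)/L(f(x),g(y)) dy dx ≤ C·(∫_a^b M(f(t))^p·F(t)^p dt)^(1/p)·(∫_c^d N(g(t))^q·G(t)^q dt)^(1/q). (Direction (10) ⟹ (9) of Theorem 3.9, continuous case 𝕋 = ℝ.) -/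
/-!
By Fubini the double integral equals `∫_c^d K(y) G(y) dy` with `K(y) = ∫_a^b F(x) / L(f x, g y) dx`.
Writing `K G = (N(g)⁻¹ K) (N(g) G)`, Hölder's inequality bounds it by
`(∫ N(g)^(-p) K^p)^(1/p) (∫ N(g)^q G^q)^(1/q)`, and hypothesis (10) bounds the first factor by
`C (∫ M(f)^p F^p)^(1/p)`.
-/

open MeasureTheory Set

theorem ContinuousOn.memLp_restrict_of_isCompact_s13 {X : Type*} [TopologicalSpace X] [T2Space X]
    [MeasurableSpace X] [OpensMeasurableSpace X] {μ : Measure X} [IsFiniteMeasureOnCompacts μ]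
    {s : Set X} {u : X → ℝ} (hs : IsCompact s) (hu : ContinuousOn u s) (r : ENNReal) :
    MemLp u r (μ.restrict s) := by
  have : IsFiniteMeasure (μ.restrict s) := isFiniteMeasure_restrict.2 hs.measure_ne_top
  obtain ⟨B, hB⟩ := hs.exists_bound_of_continuousOn hu
  exact .of_bound (hu.aestronglyMeasurable hs.measurableSet) B
    ((ae_restrict_iff' hs.measurableSet).2 (.of_forall hB))

theorem intervalIntegral_mul_le_Lp_mul_Lq_of_nonneg {p q c d : ℝ} (hpq : p.HolderConjugate q)
    {u v : ℝ → ℝ} (hcd : c ≤ d) (hu : ContinuousOn u (Icc c d)) (hv : ContinuousOn v (Icc c d))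
    (hu0 : ∀ y ∈ Icc c d, 0 ≤ u y) (hv0 : ∀ y ∈ Icc c d, 0 ≤ v y) :
    ∫ y in c..d, u y * v y ≤ (∫ y in c..d, u y ^ p) ^ (1 / p) * (∫ y in c..d, v y ^ q) ^ (1 / q) := by
  simp only [intervalIntegral.integral_of_le hcd, ← integral_Icc_eq_integral_Ioc]
  exact integral_mul_le_Lp_mul_Lq_of_nonneg hpq
    ((ae_restrict_iff' measurableSet_Icc).2 (.of_forall hu0))
    ((ae_restrict_iff' measurableSet_Icc).2 (.of_forall hv0))
    (hu.memLp_restrict_of_isCompact_s13 isCompact_Icc _) (hv.memLp_restrict_of_isCompact_s13 isCompact_Icc _)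

theorem intervalIntegral_mul_le_weighted_Lp_mul_Lq {p q c d : ℝ} (hpq : p.HolderConjugate q)
    {u v w : ℝ → ℝ} (hcd : c ≤ d) (hu : ContinuousOn u (Icc c d)) (hv : ContinuousOn v (Icc c d))
    (hw : ContinuousOn w (Icc c d)) (hu0 : ∀ y ∈ Icc c d, 0 ≤ u y)
    (hv0 : ∀ y ∈ Icc c d, 0 ≤ v y) (hw0 : ∀ y ∈ Icc c d, 0 < w y) :
    ∫ y in c..d, u y * v y ≤
      (∫ y in c..d, w y ^ (-p) * u y ^ p) ^ (1 / p) * (∫ y in c..d, w y ^ q * v y ^ q) ^ (1 / q) := by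
  have hw0' : ∀ y ∈ uIcc c d, 0 < w y := by rwa [uIcc_of_le hcd]
  calc ∫ y in c..d, u y * v y = ∫ y in c..d, u y / w y * (w y * v y) :=
        intervalIntegral.integral_congr fun y hy => by field_simp [(hw0' y hy).ne']
    _ ≤ (∫ y in c..d, (u y / w y) ^ p) ^ (1 / p) * (∫ y in c..d, (w y * v y) ^ q) ^ (1 / q) :=
        intervalIntegral_mul_le_Lp_mul_Lq_of_nonneg hpq hcd (hu.div hw fun y hy => (hw0 y hy).ne')
          (hw.mul hv) (fun y hy => div_nonneg (hu0 y hy) (hw0 y hy).le)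
          (fun y hy => mul_nonneg (hw0 y hy).le (hv0 y hy))
    _ = _ := by
        congr 2 <;> refine intervalIntegral.integral_congr fun y hy => ?_ <;>
          rw [uIcc_of_le hcd] at hy
        · rw [Real.div_rpow (hu0 y hy) (hw0 y hy).le, Real.rpow_neg (hw0 y hy).le, div_eq_inv_mul]
        · exact Real.mul_rpow (hw0 y hy).le (hv0 y hy)

theorem intervalIntegral_mul_le_of_weighted_Lp_le {p q c d A : ℝ} (hpq : p.HolderConjugate q)
    {u v w : ℝ → ℝ} (hcd : c ≤ d) (hu : ContinuousOn u (Icc c d)) (hv : ContinuousOn v (Icc c d))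
    (hw : ContinuousOn w (Icc c d)) (hu0 : ∀ y ∈ Icc c d, 0 ≤ u y)
    (hv0 : ∀ y ∈ Icc c d, 0 ≤ v y) (hw0 : ∀ y ∈ Icc c d, 0 < w y)
    (hA : ∫ y in c..d, w y ^ (-p) * u y ^ p ≤ A) :
    ∫ y in c..d, u y * v y ≤ A ^ (1 / p) * (∫ y in c..d, w y ^ q * v y ^ q) ^ (1 / q) := by
  have hu_nonneg : 0 ≤ ∫ y in c..d, w y ^ (-p) * u y ^ p :=
    intervalIntegral.integral_nonneg hcd fun y hy =>
      mul_nonneg (Real.rpow_nonneg (hw0 y hy).le _) (Real.rpow_nonneg (hu0 y hy) _)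
  have hv_nonneg : 0 ≤ ∫ y in c..d, w y ^ q * v y ^ q :=
    intervalIntegral.integral_nonneg hcd fun y hy =>
      mul_nonneg (Real.rpow_nonneg (hw0 y hy).le _) (Real.rpow_nonneg (hv0 y hy) _)
  calc _ ≤ _ := intervalIntegral_mul_le_weighted_Lp_mul_Lq hpq hcd hu hv hw hu0 hv0 hw0
    _ ≤ _ := mul_le_mul_of_nonneg_right
        (Real.rpow_le_rpow hu_nonneg hA (one_div_nonneg.2 hpq.nonneg))
        (Real.rpow_nonneg hv_nonneg _)

theorem intervalIntegral_integral_swap_of_continuousOn {a b c d : ℝ} (hab : a ≤ b) (hcd : c ≤ d)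
    {φ : ℝ → ℝ → ℝ} (hφ : ContinuousOn (Function.uncurry φ) (Icc a b ×ˢ Icc c d)) :
    ∫ x in a..b, ∫ y in c..d, φ x y = ∫ y in c..d, ∫ x in a..b, φ x y := by
  simp only [intervalIntegral.integral_of_le hab, intervalIntegral.integral_of_le hcd,
    ← integral_Icc_eq_integral_Ioc]
  refine integral_integral_swap ?_
  rw [Measure.prod_restrict]
  exact hφ.integrableOn_compact (isCompact_Icc.prod isCompact_Icc)

theorem continuousOn_intervalIntegral_of_continuousOn_prod {X : Type*} [MetricSpace X]
    {s : Set X} (hs : IsClosed s) {a b : ℝ} {φ : X → ℝ → ℝ}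
    (hφ : ContinuousOn (Function.uncurry φ) (s ×ˢ uIcc a b)) :
    ContinuousOn (fun y => ∫ x in a..b, φ y x) s := by
  obtain ⟨Φ, hΦ⟩ := ContinuousMap.exists_restrict_eq (Y := ℝ) (hs.prod isClosed_Icc)
    ⟨_, hφ.domRestrict⟩
  refine (intervalIntegral.continuous_parametric_intervalIntegral_of_continuous'
    (μ := volume) (f := fun y x => Φ (y, x)) Φ.continuous a b).continuousOn.congr fun y hy => ?_
  exact intervalIntegral.integral_congr fun x hx => (congr($(hΦ) ⟨(y, x), hy, hx⟩)).symm

section Kernel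

variable {a b c d : ℝ} {F G f g : ℝ → ℝ} {L : ℝ × ℝ → ℝ}

theorem continuousOn_intervalIntegral_div_kernel (hab : a ≤ b) {t : Set ℝ} (ht : IsClosed t)
    (hF : ContinuousOn F (Icc a b)) (hf : ContinuousOn f (Icc a b)) (hg : ContinuousOn g t)
    (hL : Continuous L) (hL0 : ∀ z, L z ≠ 0) :
    ContinuousOn (fun y => ∫ x in a..b, F x / L (f x, g y)) t := by
  refine continuousOn_intervalIntegral_of_continuousOn_prod ht ?_
  rw [uIcc_of_le hab]
  exact (hF.comp continuousOn_snd fun z hz => hz.2).div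
    (hL.comp_continuousOn ((hf.comp continuousOn_snd fun z hz => hz.2).prodMk
      (hg.comp continuousOn_fst fun z hz => hz.1))) fun z _ => hL0 _

theorem intervalIntegral_integral_mul_div_kernel (hab : a ≤ b) (hcd : c ≤ d)
    (hF : ContinuousOn F (Icc a b)) (hG : ContinuousOn G (Icc c d))
    (hf : ContinuousOn f (Icc a b)) (hg : ContinuousOn g (Icc c d))
    (hL : Continuous L) (hL0 : ∀ z, L z ≠ 0) :
    ∫ x in a..b, ∫ y in c..d, F x * G y / L (f x, g y) =
      ∫ y in c..d, (∫ x in a..b, F x / L (f x, g y)) * G y := by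
  rw [intervalIntegral_integral_swap_of_continuousOn hab hcd]
  · simp only [← intervalIntegral.integral_mul_const, mul_div_right_comm]
  · exact ((hF.comp continuousOn_fst fun z hz => hz.1).mul
      (hG.comp continuousOn_snd fun z hz => hz.2)).div
      (hL.comp_continuousOn ((hf.comp continuousOn_fst fun z hz => hz.1).prodMk
        (hg.comp continuousOn_snd fun z hz => hz.2))) fun z _ => hL0 _

end Kernel

theorem sulaiman_type_backward_continuous_general
    (a b c d p q C : ℝ) (F G f g M N : ℝ → ℝ) (L : ℝ × ℝ → ℝ)
    (hab : a < b) (hcd : c < d) (hp : 1 < p) (hpq : 1 / p + 1 / q = 1) (hC : 0 < C)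
    (hF : ContinuousOn F (Set.Icc a b)) (hFpos : ∀ t ∈ Set.Icc a b, 0 < F t)
    (hG : ContinuousOn G (Set.Icc c d)) (hGpos : ∀ t ∈ Set.Icc c d, 0 < G t)
    (hf : ContinuousOn f (Set.Icc a b)) (hg : ContinuousOn g (Set.Icc c d))
    (hN : Continuous N) (hNpos : ∀ x, 0 < N x)
    (hL : Continuous L) (hLpos : ∀ z, 0 < L z)
    (hMF : 0 < ∫ t in a..b, M (f t) ^ p * F t ^ p)
    (h10 : (∫ y in c..d, N (g y) ^ (-p) * (∫ x in a..b, F x / L (f x, g y)) ^ p)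
      ≤ C ^ p * ∫ t in a..b, M (f t) ^ p * F t ^ p) :
    (∫ x in a..b, ∫ y in c..d, F x * G y / L (f x, g y))
      ≤ C * (∫ t in a..b, M (f t) ^ p * F t ^ p) ^ (1 / p) *
          (∫ t in c..d, N (g t) ^ q * G t ^ q) ^ (1 / q) := by
  have hpq' : p.HolderConjugate q :=
    Real.holderConjugate_iff.mpr ⟨hp, by simpa only [one_div] using hpq⟩
  have hL0 : ∀ z, L z ≠ 0 := fun z => (hLpos z).ne'
  set K : ℝ → ℝ := fun y => ∫ x in a..b, F x / L (f x, g y)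
  have hK : ContinuousOn K (Icc c d) :=
    continuousOn_intervalIntegral_div_kernel hab.le isClosed_Icc hF hf hg hL hL0
  have hK0 : ∀ y ∈ Icc c d, 0 ≤ K y := fun y _ =>
    intervalIntegral.integral_nonneg hab.le fun x hx => (div_pos (hFpos x hx) (hLpos _)).le
  have hC_root : (C ^ p * ∫ t in a..b, M (f t) ^ p * F t ^ p) ^ (1 / p)
      = C * (∫ t in a..b, M (f t) ^ p * F t ^ p) ^ (1 / p) := by
    rw [Real.mul_rpow (by positivity) hMF.le, one_div, Real.rpow_rpow_inv hC.le hpq'.ne_zero]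
  calc _ = ∫ y in c..d, K y * G y :=
        intervalIntegral_integral_mul_div_kernel hab.le hcd.le hF hG hf hg hL hL0
    _ ≤ (C ^ p * ∫ t in a..b, M (f t) ^ p * F t ^ p) ^ (1 / p) *
          (∫ t in c..d, N (g t) ^ q * G t ^ q) ^ (1 / q) :=
        intervalIntegral_mul_le_of_weighted_Lp_le (w := fun y => N (g y)) hpq' hcd.le hK hG
          (hN.comp_continuousOn hg) hK0 (fun y hy => (hGpos y hy).le) (fun y _ => hNpos _) h10
    _ = _ := by rw [hC_root]

/-- Direction (10) ⟹ (9) of Theorem 3.9, continuous case 𝕋 = ℝ. -/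
theorem sulaiman_type_backward_continuous
    (a b c d p q C : ℝ) (F G f g M N : ℝ → ℝ) (L : ℝ × ℝ → ℝ)
    (hab : a < b) (hcd : c < d) (hp : 1 < p) (hpq : 1 / p + 1 / q = 1) (hC : 0 < C)
    (hF : ContinuousOn F (Set.Icc a b)) (hFpos : ∀ t ∈ Set.Icc a b, 0 < F t)
    (hG : ContinuousOn G (Set.Icc c d)) (hGpos : ∀ t ∈ Set.Icc c d, 0 < G t)
    (hf : ContinuousOn f (Set.Icc a b)) (hg : ContinuousOn g (Set.Icc c d))
    (hM : Continuous M) (hMpos : ∀ x, 0 < M x)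
    (hN : Continuous N) (hNpos : ∀ x, 0 < N x)
    (hL : Continuous L) (hLpos : ∀ z, 0 < L z)
    (hMF : 0 < ∫ t in a..b, M (f t) ^ p * F t ^ p)
    (hNG : 0 < ∫ t in c..d, N (g t) ^ q * G t ^ q)
    (h10 : (∫ y in c..d, N (g y) ^ (-p) * (∫ x in a..b, F x / L (f x, g y)) ^ p)
      ≤ C ^ p * ∫ t in a..b, M (f t) ^ p * F t ^ p) :
    (∫ x in a..b, ∫ y in c..d, F x * G y / L (f x, g y))
      ≤ C * (∫ t in a..b, M (f t) ^ p * F t ^ p) ^ (1 / p) *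
          (∫ t in c..d, N (g t) ^ q * G t ^ q) ^ (1 / q) :=
  sulaiman_type_backward_continuous_general a b c d p q C F G f g M N L hab hcd hp hpq hC hF hFpos
    hG hGpos hf hg hN hNpos hL hLpos hMF h10
end
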